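/- Suppose a (2I)×J matrix Ŵ factors as Ŵ = M B where M is the (2I)×(3(K+1)) block matrix with 2×3 blocks M^i in the first block column and α_k^i M^i in the remaining block columns, and B stacks matrices B₀, B₁, …, B_K (each 3×J) with rank(B₀) ≤ 3 and rank(B_k) = 1 for k ≥ 1. Then rank(Ŵ) ≤ K + 3. -/

import Mathlib

/-! `Ŵ = ∑ₖ (αₖⁱ Mⁱ)ᵢ Bₖ`, and each summand has rank at most `rank Bₖ`, so by subadditivity of
rank `rank Ŵ ≤ rank B₀ + K ≤ 3 + K`. -/

open Matrix

namespace Matrix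

variable {m n l κ K : Type*} [Fintype l] [Fintype κ]

theorem of_blockRow_mul_of_blockCol {R : Type*} [NonUnitalNonAssocSemiring R]
    (A : κ → Matrix m l R) (B : κ → Matrix l n R) :
    (of fun i kc => A kc.1 i kc.2 : Matrix m (κ × l) R) *
        (of fun kc j => B kc.1 kc.2 j : Matrix (κ × l) n R) =
      ∑ k, A k * B k := by
  ext i j
  simp only [mul_apply, of_apply, sum_apply, Fintype.sum_prod_type]

variable [Fintype n] [Field K]

theorem rank_add_le (A B : Matrix m n K) : (A + B).rank ≤ A.rank + B.rank := by
  rw [rank, rank, rank, mulVecLin_add]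
  exact (Submodule.finrank_mono (LinearMap.range_add_le _ _)).trans
    (Submodule.finrank_add_le_finrank_add_finrank _ _)

theorem rank_sum_le {ι : Type*} (s : Finset ι) (A : ι → Matrix m n K) :
    (∑ i ∈ s, A i).rank ≤ ∑ i ∈ s, (A i).rank :=
  Finset.le_sum_of_subadditive (fun A : Matrix m n K => A.rank) rank_zero.le rank_add_le s A

theorem rank_sum_mul_le (A : κ → Matrix m l K) (B : κ → Matrix l n K) :
    (∑ k, A k * B k).rank ≤ ∑ k, (B k).rank :=
  (rank_sum_le _ _).trans (Finset.sum_le_sum fun _ _ => rank_mul_le_right _ _)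

end Matrix

theorem rank_one_shapes_rank_bound_general (I J K : ℕ)
    (W : Matrix (Fin I × Fin 2) (Fin J) ℝ)
    (Mi : Fin I → Matrix (Fin 2) (Fin 3) ℝ)
    (α : Fin I → Fin (K + 1) → ℝ)
    (Bk : Fin (K + 1) → Matrix (Fin 3) (Fin J) ℝ)
    (hBk : ∀ k : Fin (K + 1), k ≠ 0 → (Bk k).rank = 1)
    (hW : W = (Matrix.of fun ir kc => α ir.1 kc.1 * Mi ir.1 ir.2 kc.2 :
                Matrix (Fin I × Fin 2) (Fin (K + 1) × Fin 3) ℝ)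
              * (Matrix.of fun kc j => Bk kc.1 kc.2 j :
                Matrix (Fin (K + 1) × Fin 3) (Fin J) ℝ)) :
    W.rank ≤ K + 3 := by
  let A : Fin (K + 1) → Matrix (Fin I × Fin 2) (Fin 3) ℝ :=
    fun k => of fun ir c => α ir.1 k * Mi ir.1 ir.2 c
  have hWsum : W = ∑ k, A k * Bk k := hW.trans (of_blockRow_mul_of_blockCol A Bk)
  have hShapes : ∑ k : Fin K, (Bk k.succ).rank = K := by
    simp [hBk _ (Fin.succ_ne_zero _)]
  calc W.rank ≤ ∑ k, (Bk k).rank := hWsum ▸ rank_sum_mul_le A Bk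
    _ = (Bk 0).rank + K := by rw [Fin.sum_univ_succ, hShapes]
    _ ≤ K + 3 := by linarith [(Bk 0).rank_le_height]

/-- If the noise-free measurement matrix factors as `Ŵ = M B` with the rank-one
basis-shapes structure — `M` has block rows `(Mⁱ, α₁ⁱ Mⁱ, …, α_Kⁱ Mⁱ)` and `B`
stacks `B₀, B₁, …, B_K` with `rank B₀ ≤ 3` and `rank B_k = 1` for `k ≥ 1` — then
`rank Ŵ ≤ K + 3`.  Rows of `Ŵ` are indexed by `Fin I × Fin 2`, the inner index of
the factorisation by `Fin (K+1) × Fin 3`, and block `0` is the rigid shape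
(`α i 0 = 1`). -/
theorem rank_one_shapes_rank_bound (I J K : ℕ)
    (W : Matrix (Fin I × Fin 2) (Fin J) ℝ)
    (Mi : Fin I → Matrix (Fin 2) (Fin 3) ℝ)
    (α : Fin I → Fin (K + 1) → ℝ)
    (Bk : Fin (K + 1) → Matrix (Fin 3) (Fin J) ℝ)
    (hα0 : ∀ i, α i 0 = 1)
    (hB0 : (Bk 0).rank ≤ 3)
    (hBk : ∀ k : Fin (K + 1), k ≠ 0 → (Bk k).rank = 1)
    (hW : W = (Matrix.of fun ir kc => α ir.1 kc.1 * Mi ir.1 ir.2 kc.2 :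
                Matrix (Fin I × Fin 2) (Fin (K + 1) × Fin 3) ℝ)
              * (Matrix.of fun kc j => Bk kc.1 kc.2 j :
                Matrix (Fin (K + 1) × Fin 3) (Fin J) ℝ)) :
    W.rank ≤ K + 3 :=
  rank_one_shapes_rank_bound_general I J K W Mi α Bk hBk hW
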